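/- arXiv:1606.08350 — 2 statements merged into one kernel-verified Lean document; each statement's English description precedes it below -/
import Mathlib

section
/- Fix positive integers P and M, strictly positive weights η_i(j) > 0, and let π(γ'|γ) = ∏_{n=1}^P π_n(γ'_n | γ'_{1:n−1}, γ_{n+1:P}) be the Gibbs transition kernel, where π_n(j | a_{1:n−1}, b_{n+1:P}) is proportional to η_n(j) ∏_{i=1}^{n−1} (1 − 1_{{1,…,M}}(j) δ_j[a_i]) ∏_{i=n+1}^{P} (1 − 1_{{1,…,M}}(j) δ_j[b_i]). If γ ∈ Γ (i.e., γ is positive 1-1) and π(γ'|γ) > 0, then γ' ∈ Γ. In other words, starting from a positive 1-1 vector, every iterate of the Gibbs sampler is positive 1-1. -/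
open Finset

/-- `1_{{1,…,M}}(j)`: the indicator (as a real number) that `1 ≤ j ≤ M`. -/
def ind1M (M : ℕ) (j : ℤ) : ℝ := if 1 ≤ j ∧ j ≤ (M : ℤ) then 1 else 0

/-- `δ_a[b]`: the Kronecker delta (as a real number). -/
def kdelta (a b : ℤ) : ℝ := if a = b then 1 else 0

/-- `γ` is positive 1-1: no distinct indices `i, i'` with `γ i = γ i' > 0`. -/
def PosOneOne {P : ℕ} (γ : Fin P → ℤ) : Prop :=
  ∀ i i' : Fin P, i ≠ i' → ¬(γ i = γ i' ∧ 0 < γ i)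

/-- Unnormalized weight of the `n`th Gibbs conditional given the other
coordinates `c`: `η_n(j) ∏_{i∈n̄} (1 − 1_{{1,…,M}}(j) δ_j[c_i])`. -/
def wcond {P : ℕ} (M : ℕ) (η : Fin P → ℤ → ℝ) (c : Fin P → ℤ) (n : Fin P) (j : ℤ) : ℝ :=
  η n j * ∏ i ∈ ({n}ᶜ : Finset (Fin P)), (1 - ind1M M j * kdelta j (c i))

/-- Normalizing constant `K_n` of the `n`th Gibbs conditional. -/
noncomputable def Knorm {P : ℕ} (M : ℕ) (η : Fin P → ℤ → ℝ) (c : Fin P → ℤ) (n : Fin P) : ℝ :=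
  ∑ j ∈ Finset.Icc (-1 : ℤ) (M : ℤ), wcond M η c n j

/-- The mixed conditioning vector for the `n`th sub-iteration of the Gibbs
sampler: coordinates `i < n` come from the already-updated state `γ'`, the
remaining ones from the old state `γ`. -/
def mix {P : ℕ} (γ' γ : Fin P → ℤ) (n : Fin P) : Fin P → ℤ :=
  fun i => if i < n then γ' i else γ i

/-- The Gibbs transition kernel
`π(γ'|γ) = ∏_{n=1}^P π_n(γ'_n | γ'_{1:n−1}, γ_{n+1:P})`. -/
noncomputable def gibbs {P : ℕ} (M : ℕ) (η : Fin P → ℤ → ℝ) (γ' γ : Fin P → ℤ) : ℝ :=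
  ∏ n : Fin P, wcond M η (mix γ' γ n) n (γ' n) / Knorm M η (mix γ' γ n) n

/-- starting from a positive 1-1 vector, every iterate of the
Gibbs sampler is positive 1-1: if `γ ∈ Γ` and `π(γ'|γ) > 0` then `γ' ∈ Γ`. -/
theorem stmt6 (P M : ℕ) (hP : 0 < P) (hM : 0 < M) (η : Fin P → ℤ → ℝ)
    (hη : ∀ i : Fin P, ∀ j ∈ Finset.Icc (-1 : ℤ) (M : ℤ), 0 < η i j)
    (γ γ' : Fin P → ℤ)
    (hγr : ∀ i, γ i ∈ Finset.Icc (-1 : ℤ) (M : ℤ))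
    (hγ'r : ∀ i, γ' i ∈ Finset.Icc (-1 : ℤ) (M : ℤ))
    (hγ : PosOneOne γ) (hpos : 0 < gibbs M η γ' γ) :
    PosOneOne γ' := by
  have key : ∀ n i : Fin P, i ≠ n → 0 < γ' n →
      γ' n ≠ mix γ' γ n i := by
    intro n i hin hposn heq
    have hne : gibbs M η γ' γ ≠ 0 := ne_of_gt hpos
    apply hne
    unfold gibbs
    apply Finset.prod_eq_zero (Finset.mem_univ n)
    have hw : wcond M η (mix γ' γ n) n (γ' n) = 0 := by
      unfold wcond
      have : (1 - ind1M M (γ' n) * kdelta (γ' n) (mix γ' γ n i)) = 0 := by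
        have hM' : γ' n ≤ (M : ℤ) := (Finset.mem_Icc.mp (hγ'r n)).2
        simp [ind1M, kdelta, ← heq, hM', show (1:ℤ) ≤ γ' n by omega]
      rw [Finset.prod_eq_zero (by simp [hin] : i ∈ ({n}ᶜ : Finset (Fin P))) this,
        mul_zero]
    rw [hw, zero_div]
  intro i i' hne ⟨heq, hposv⟩
  rcases lt_or_gt_of_ne hne with h | h
  · exact key i' i h.ne (heq ▸ hposv) (by simp [mix, h, heq])
  · exact key i i' h.ne hposv (by simp [mix, h, heq])
end

section
/- Fix positive integers P and M, strictly positive weights η_i(j) > 0, and let π(γ'|γ) be the Gibbs transition kernel for the target π(γ) ∝ 1_Γ(γ) ∏_{i=1}^P η_i(γ_i), restricted to the finite state space Γ of positive 1-1 vectors. Then the two-step transition probabilities are uniformly strictly positive: for all γ, γ' ∈ Γ, π²(γ'|γ) = ∑_{ζ∈Γ} π(γ'|ζ) π(ζ|γ) ≥ π(γ'|0_P) π(0_P|γ) > 0, where 0_P is the all-zeros vector. In particular β := min_{γ,γ'∈Γ} π²(γ'|γ) > 0, so the chain is irreducible and regular. -/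
open Finset

/-- The finite state space `Γ` of positive 1-1 vectors in `{−1,…,M}^P`. -/
noncomputable def GammaF (P M : ℕ) : Finset (Fin P → ℤ) :=
  (Fintype.piFinset fun _ : Fin P => Finset.Icc (-1 : ℤ) (M : ℤ)).filter
    (fun γ => ∀ i i' : Fin P, i ≠ i' → ¬(γ i = γ i' ∧ 0 < γ i))

section
variable {P : ℕ} {M : ℕ} {η : Fin P → ℤ → ℝ}

lemma factor_cases (M : ℕ) (j a : ℤ) :
    (1 - ind1M M j * kdelta j a) = 0 ∨ (1 - ind1M M j * kdelta j a) = 1 := by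
  unfold ind1M kdelta
  split <;> split <;> norm_num

lemma factor_nonneg (M : ℕ) (j a : ℤ) : 0 ≤ 1 - ind1M M j * kdelta j a := by
  rcases factor_cases M j a with h | h <;> rw [h] ; norm_num

lemma factor_eq_one_of (M : ℕ) (j a : ℤ) (h : ¬ 1 ≤ j ∨ j ≠ a) :
    (1 - ind1M M j * kdelta j a) = 1 := by
  unfold ind1M kdelta
  rcases h with h | h
  · rw [if_neg (by tauto)]; ring
  · rw [if_neg h]; ring

lemma wcond_nonneg (hη : ∀ i : Fin P, ∀ j ∈ Finset.Icc (-1 : ℤ) (M : ℤ), 0 < η i j)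
    (c : Fin P → ℤ) (n : Fin P) (j : ℤ) (hj : j ∈ Finset.Icc (-1 : ℤ) (M : ℤ)) :
    0 ≤ wcond M η c n j := by
  exact mul_nonneg (hη n j hj).le (Finset.prod_nonneg fun i _ => factor_nonneg M j (c i))

lemma wcond_pos (hη : ∀ i : Fin P, ∀ j ∈ Finset.Icc (-1 : ℤ) (M : ℤ), 0 < η i j)
    (c : Fin P → ℤ) (n : Fin P) (j : ℤ) (hj : j ∈ Finset.Icc (-1 : ℤ) (M : ℤ))
    (h : ∀ i : Fin P, i ≠ n → (¬ 1 ≤ j ∨ j ≠ c i)) :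
    0 < wcond M η c n j := by
  unfold wcond
  rw [Finset.prod_eq_one (fun i hi => factor_eq_one_of M j (c i)
    (h i (by simpa using hi)))]
  simpa using hη n j hj

lemma neg_one_mem : (-1 : ℤ) ∈ Finset.Icc (-1 : ℤ) (M : ℤ) := by
  simp only [Finset.mem_Icc]
  omega

lemma Knorm_pos (hη : ∀ i : Fin P, ∀ j ∈ Finset.Icc (-1 : ℤ) (M : ℤ), 0 < η i j)
    (c : Fin P → ℤ) (n : Fin P) : 0 < Knorm M η c n := by
  have h1 : 0 < wcond M η c n (-1) :=
    wcond_pos hη c n (-1) neg_one_mem (fun i _ => Or.inl (by norm_num))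
  have := Finset.single_le_sum (f := fun j => wcond M η c n j)
    (fun j hj => wcond_nonneg hη c n j hj) (neg_one_mem (M := M))
  exact lt_of_lt_of_le h1 this

lemma gibbs_nonneg (hη : ∀ i : Fin P, ∀ j ∈ Finset.Icc (-1 : ℤ) (M : ℤ), 0 < η i j)
    (γ' γ : Fin P → ℤ) (hγ' : ∀ i, γ' i ∈ Finset.Icc (-1 : ℤ) (M : ℤ)) :
    0 ≤ gibbs M η γ' γ := by
  apply Finset.prod_nonneg
  intro n _
  exact div_nonneg (wcond_nonneg hη _ n _ (hγ' n)) (Knorm_pos hη _ n).le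
end

section
variable {P : ℕ} {M : ℕ} {η : Fin P → ℤ → ℝ}

lemma mem_GammaF {γ : Fin P → ℤ} :
    γ ∈ GammaF P M ↔ (∀ i, γ i ∈ Finset.Icc (-1 : ℤ) (M : ℤ)) ∧ PosOneOne γ := by
  simp [GammaF, Fintype.mem_piFinset, PosOneOne]

lemma zero_mem_Icc : (0 : ℤ) ∈ Finset.Icc (-1 : ℤ) (M : ℤ) := by
  simp only [Finset.mem_Icc]; omega

lemma zero_mem_GammaF : (fun _ => (0 : ℤ)) ∈ GammaF P M := by
  rw [mem_GammaF]
  exact ⟨fun _ => zero_mem_Icc, fun i i' _ h => by simp at h⟩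

lemma gibbs_to_zero_pos (hη : ∀ i : Fin P, ∀ j ∈ Finset.Icc (-1 : ℤ) (M : ℤ), 0 < η i j)
    (γ : Fin P → ℤ) : 0 < gibbs M η (fun _ => 0) γ := by
  apply Finset.prod_pos
  intro n _
  exact div_pos (wcond_pos hη _ n 0 zero_mem_Icc (fun i _ => Or.inl (by norm_num)))
    (Knorm_pos hη _ n)

lemma gibbs_from_zero_pos (hη : ∀ i : Fin P, ∀ j ∈ Finset.Icc (-1 : ℤ) (M : ℤ), 0 < η i j)
    (γ' : Fin P → ℤ) (hγ' : γ' ∈ GammaF P M) :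
    0 < gibbs M η γ' (fun _ => 0) := by
  rw [mem_GammaF] at hγ'
  apply Finset.prod_pos
  intro n _
  refine div_pos (wcond_pos hη _ n (γ' n) (hγ'.1 n) ?_) (Knorm_pos hη _ n)
  intro i hi
  by_cases h1 : 1 ≤ γ' n
  · right
    unfold mix
    split
    · intro heq
      exact hγ'.2 n i (Ne.symm hi) ⟨heq, by omega⟩
    · show γ' n ≠ 0
      omega
  · exact Or.inl h1
end

/-- the two-step transition probabilities of the Gibbs sampler on
`Γ` are uniformly strictly positive: for all `γ, γ' ∈ Γ`,
`π²(γ'|γ) = ∑_{ζ∈Γ} π(γ'|ζ) π(ζ|γ) ≥ π(γ'|0_P) π(0_P|γ) > 0`; in particular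
there is a `β > 0` below all two-step transition probabilities, so the chain is
irreducible and regular. -/
theorem stmt9 (P M : ℕ) (hP : 0 < P) (hM : 0 < M) (η : Fin P → ℤ → ℝ)
    (hη : ∀ i : Fin P, ∀ j ∈ Finset.Icc (-1 : ℤ) (M : ℤ), 0 < η i j) :
    (∀ γ ∈ GammaF P M, ∀ γ' ∈ GammaF P M,
      gibbs M η γ' (fun _ => 0) * gibbs M η (fun _ => 0) γ ≤
        ∑ ζ ∈ GammaF P M, gibbs M η γ' ζ * gibbs M η ζ γ ∧
      0 < ∑ ζ ∈ GammaF P M, gibbs M η γ' ζ * gibbs M η ζ γ) ∧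
    (∃ β : ℝ, 0 < β ∧ ∀ γ ∈ GammaF P M, ∀ γ' ∈ GammaF P M,
      β ≤ ∑ ζ ∈ GammaF P M, gibbs M η γ' ζ * gibbs M η ζ γ) := by
  have key : ∀ γ ∈ GammaF P M, ∀ γ' ∈ GammaF P M,
      gibbs M η γ' (fun _ => 0) * gibbs M η (fun _ => 0) γ ≤
        ∑ ζ ∈ GammaF P M, gibbs M η γ' ζ * gibbs M η ζ γ ∧
      0 < ∑ ζ ∈ GammaF P M, gibbs M η γ' ζ * gibbs M η ζ γ := by
    intro γ hγ γ' hγ'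
    have hle : gibbs M η γ' (fun _ => 0) * gibbs M η (fun _ => 0) γ ≤
        ∑ ζ ∈ GammaF P M, gibbs M η γ' ζ * gibbs M η ζ γ := by
      apply Finset.single_le_sum (f := fun ζ => gibbs M η γ' ζ * gibbs M η ζ γ)
        (fun ζ hζ => mul_nonneg
          (gibbs_nonneg hη γ' ζ ((mem_GammaF.mp hγ').1))
          (gibbs_nonneg hη ζ γ ((mem_GammaF.mp hζ).1)))
        zero_mem_GammaF
    exact ⟨hle, lt_of_lt_of_le
      (mul_pos (gibbs_from_zero_pos hη γ' hγ') (gibbs_to_zero_pos hη γ)) hle⟩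
  refine ⟨key, ?_⟩
  obtain ⟨p, hp, hmin⟩ := Finset.exists_min_image ((GammaF P M) ×ˢ (GammaF P M))
    (fun p => ∑ ζ ∈ GammaF P M, gibbs M η p.2 ζ * gibbs M η ζ p.1)
    ⟨((fun _ => 0), (fun _ => 0)), Finset.mem_product.mpr ⟨zero_mem_GammaF, zero_mem_GammaF⟩⟩
  rw [Finset.mem_product] at hp
  refine ⟨_, (key p.1 hp.1 p.2 hp.2).2, ?_⟩
  intro γ hγ γ' hγ'
  exact hmin (γ, γ') (Finset.mem_product.mpr ⟨hγ, hγ'⟩)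
end
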